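/- arXiv:2011.12796 — 3 statements merged into one kernel-verified Lean document; each statement's English description precedes it below -/
import Mathlib

section
/- Let 1 < p ≤ 2, δ ≥ 0, a ≥ 0, and let φ_a be the shifted N-function. Then φ_a satisfies the Δ₂-condition uniformly in a ≥ 0 and δ ≥ 0: there is a constant K depending only on p such that φ_a(2t) ≤ K·φ_a(t) for all t ≥ 0. -/
open scoped BigOperators

noncomputable def phiN' (p δ t : ℝ) : ℝ := (δ + t) ^ (p - 2) * t

noncomputable def phiShift (p δ a t : ℝ) : ℝ :=
  ∫ s in (0:ℝ)..t, phiN' p δ (a + s) * (s / (a + s))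

lemma phiShift_eq (p δ a t : ℝ) (ha : 0 ≤ a) (ht : 0 ≤ t) :
    phiShift p δ a t = ∫ s in (0:ℝ)..t, (δ + a + s) ^ (p - 2) * s := by
  unfold phiShift
  apply intervalIntegral.integral_congr
  intro s hs
  rw [Set.uIcc_of_le ht] at hs
  have hs0 : 0 ≤ s := hs.1
  unfold phiN'
  rcases eq_or_lt_of_le (add_nonneg ha hs0) with h | h
  · have hA : a = 0 := by linarith [hs0, ha, h.symm ▸ (le_refl (a+s))]
    have hS : s = 0 := by linarith [h]
    simp [hA, hS]
  · have hne : a + s ≠ 0 := ne_of_gt h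
    field_simp
    ring_nf

lemma Gcont (p δ a T : ℝ) (hp : 1 < p) (hδ : 0 ≤ δ) (ha : 0 ≤ a) :
    ContinuousOn (fun s : ℝ => (δ + a + s) ^ (p - 2) * s) (Set.Icc 0 T) := by
  rcases eq_or_lt_of_le (add_nonneg hδ ha) with h | h
  · -- δ + a = 0 : the function equals s ^ (p-1) on [0,T]
    have key : ∀ s ∈ Set.Icc (0:ℝ) T, (δ + a + s) ^ (p - 2) * s = s ^ (p - 1) := by
      intro s hs
      rw [← h, zero_add]
      rcases eq_or_lt_of_le hs.1 with h0 | h0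
      · rw [← h0, Real.zero_rpow (by linarith : p - 1 ≠ 0), mul_zero]
      · have : s ^ (p - 1) = s ^ (p - 2) * s := by
          rw [show p - 1 = (p - 2) + 1 by ring, Real.rpow_add_one (ne_of_gt h0)]
        rw [this]
    refine ContinuousOn.congr ?_ key
    intro x _
    exact (Real.continuousAt_rpow_const x (p - 1) (Or.inr (by linarith))).continuousWithinAt
  · -- δ + a > 0 : base is positive, everything is continuous
    refine ContinuousOn.mul ?_ continuousOn_id
    refine ContinuousOn.rpow_const ?_ ?_
    · exact (continuous_const.add continuous_id).continuousOn
    · intro x hx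
      exact Or.inl (ne_of_gt (by linarith [hx.1] : (0:ℝ) < δ + a + x))

/-- The shifted N-functions satisfy the Δ₂-condition uniformly in the shift `a ≥ 0`
    and in `δ ≥ 0`, with constant depending only on `p`. -/
theorem stmt_2 (p : ℝ) (hp : 1 < p) (hp2 : p ≤ 2) :
    ∃ K : ℝ, 0 < K ∧
      ∀ δ a t : ℝ, 0 ≤ δ → 0 ≤ a → 0 ≤ t →
        phiShift p δ a (2 * t) ≤ K * phiShift p δ a t := by
  refine ⟨4, by norm_num, ?_⟩
  intro δ a t hδ ha ht
  set G : ℝ → ℝ := fun s => (δ + a + s) ^ (p - 2) * s with hG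
  rw [phiShift_eq p δ a (2 * t) ha (by linarith),
      phiShift_eq p δ a t ha ht]
  have hsub : (∫ s in (0:ℝ)..(2 * t), G s) = 2 * ∫ u in (0:ℝ)..t, G (2 * u) := by
    have := intervalIntegral.smul_integral_comp_mul_left G (a := 0) (b := t) 2
    simp only [mul_zero, smul_eq_mul] at this
    rw [← this]
  rw [hsub]
  have hi1 : IntervalIntegrable (fun u => G (2 * u)) MeasureTheory.volume 0 t := by
    apply ContinuousOn.intervalIntegrable_of_Icc ht
    refine (Gcont p δ a (2 * t) hp hδ ha).comp
      ((continuous_const.mul continuous_id).continuousOn) ?_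
    intro x hx
    exact ⟨by simp; linarith [hx.1], by simp; linarith [hx.2]⟩
  have hi2 : IntervalIntegrable (fun u => 2 * G u) MeasureTheory.volume 0 t := by
    exact ((Gcont p δ a t hp hδ ha).intervalIntegrable_of_Icc ht).const_mul 2
  have hmono : (∫ u in (0:ℝ)..t, G (2 * u)) ≤ ∫ u in (0:ℝ)..t, 2 * G u := by
    apply intervalIntegral.integral_mono_on ht hi1 hi2
    intro u hu
    rcases eq_or_lt_of_le hu.1 with h0 | h0
    · simp [hG, ← h0]
    · have hb : (0:ℝ) < δ + a + u := by linarith [add_nonneg hδ ha]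
      have hrpow : (δ + a + 2 * u) ^ (p - 2) ≤ (δ + a + u) ^ (p - 2) :=
        Real.rpow_le_rpow_of_nonpos hb (by linarith) (by linarith)
      have : (δ + a + 2 * u) ^ (p - 2) * (2 * u) ≤ (δ + a + u) ^ (p - 2) * (2 * u) :=
        mul_le_mul_of_nonneg_right hrpow (by linarith)
      calc G (2 * u) = (δ + a + 2 * u) ^ (p - 2) * (2 * u) := rfl
        _ ≤ (δ + a + u) ^ (p - 2) * (2 * u) := this
        _ = 2 * G u := by ring
  have hconst : (∫ u in (0:ℝ)..t, 2 * G u) = 2 * ∫ u in (0:ℝ)..t, G u := by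
    exact intervalIntegral.integral_const_mul 2 G
  nlinarith [hmono, hconst]
end

section
/- Let 1 < p ≤ 2, δ ≥ 0, a ≥ 0. Define (φ_a)*(s) := sup_{t≥0} (st − φ_a(t)) the Young conjugate of the shifted N-function φ_a. Then there exist constants c, C > 0 depending only on p such that for all s ≥ 0: c·((δ+a)^{p-1}+s)^{p'-2}·s² ≤ (φ_a)*(s) ≤ C·((δ+a)^{p-1}+s)^{p'-2}·s², where p' = p/(p−1). -/
open scoped BigOperators

/-- Young (Legendre–Fenchel) conjugate of the shifted N-function:
    `(φ_a)*(s) = sup_{t ≥ 0} (s·t − φ_a(t))`. -/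
noncomputable def phiShiftConj (p δ a s : ℝ) : ℝ :=
  sSup ((fun t => s * t - phiShift p δ a t) '' Set.Ici (0:ℝ))

section Aux

variable {p : ℝ}

lemma stmt4_gint (hp : 1 < p) {b t : ℝ} (hb : 0 ≤ b) (ht : 0 ≤ t) :
    IntervalIntegrable (fun x => (b + x) ^ (p - 2) * x) MeasureTheory.volume 0 t := by
  rcases hb.eq_or_lt with h | h
  · apply (intervalIntegral.intervalIntegrable_rpow' (r := p - 1)
      (by linarith) (a := 0) (b := t)).congr
    intro x hx
    rw [Set.uIoc_of_le ht] at hx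
    have hx0 : 0 < x := hx.1
    show x ^ (p - 1) = (b + x) ^ (p - 2) * x
    rw [← h, zero_add, show p - 1 = (p - 2) + 1 by ring, Real.rpow_add_one hx0.ne']
  · apply ContinuousOn.intervalIntegrable
    apply ContinuousOn.mul ?_ continuousOn_id
    apply ContinuousOn.rpow_const (continuous_const.add continuous_id).continuousOn
    intro x hx
    rw [Set.uIcc_of_le ht] at hx
    exact Or.inl (by have := hx.1; show b + x ≠ 0; positivity)

lemma stmt4_phi_eq {δ a t : ℝ} (ha : 0 ≤ a) (ht : 0 ≤ t) :
    phiShift p δ a t = ∫ x in (0:ℝ)..t, (δ + a + x) ^ (p - 2) * x := by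
  apply intervalIntegral.integral_congr
  intro x hx
  rw [Set.uIcc_of_le ht] at hx
  have hx0 : 0 ≤ x := hx.1
  simp only [phiN']
  rcases (add_nonneg ha hx0).eq_or_lt with h | h
  · have hxz : x = 0 := by linarith
    have haz : a = 0 := by linarith
    simp [hxz, haz]
  · have h1 : (a + x) * (x / (a + x)) = x := by field_simp
    rw [mul_assoc, h1, ← add_assoc]

lemma stmt4_phi_ge (hp : 1 < p) (hp2 : p ≤ 2) {b t : ℝ} (hb : 0 ≤ b) (ht : 0 ≤ t) :
    (b + t) ^ (p - 2) * (t ^ 2 / 2) ≤ ∫ x in (0:ℝ)..t, (b + x) ^ (p - 2) * x := by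
  have h1 : (∫ x in (0:ℝ)..t, (b + t) ^ (p - 2) * x)
      ≤ ∫ x in (0:ℝ)..t, (b + x) ^ (p - 2) * x := by
    apply intervalIntegral.integral_mono_on ht
      ((continuous_const.mul continuous_id).intervalIntegrable 0 t)
      (stmt4_gint hp hb ht)
    intro x hx
    obtain ⟨hx0, hxt⟩ := hx
    rcases hx0.eq_or_lt with h | h
    · rw [← h]; simp
    · refine mul_le_mul_of_nonneg_right ?_ hx0
      exact Real.rpow_le_rpow_of_nonpos (by linarith) (by linarith) (by linarith)
  have h2 : (∫ x in (0:ℝ)..t, (b + t) ^ (p - 2) * x) = (b + t) ^ (p - 2) * (t ^ 2 / 2) := by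
    rw [intervalIntegral.integral_const_mul, integral_id]
    ring
  linarith

lemma stmt4_phi_nonneg (hp : 1 < p) (hp2 : p ≤ 2) {b t : ℝ} (hb : 0 ≤ b) (ht : 0 ≤ t) :
    0 ≤ ∫ x in (0:ℝ)..t, (b + x) ^ (p - 2) * x := by
  refine le_trans ?_ (stmt4_phi_ge hp hp2 hb ht)
  have h1 : (0:ℝ) ≤ (b + t) ^ (p - 2) := Real.rpow_nonneg (by linarith) _
  positivity

lemma stmt4_phi_le_pow (hp : 1 < p) (hp2 : p ≤ 2) {b t : ℝ} (hb : 0 ≤ b) (ht : 0 ≤ t) :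
    (∫ x in (0:ℝ)..t, (b + x) ^ (p - 2) * x) ≤ t ^ p := by
  have h1 : (∫ x in (0:ℝ)..t, (b + x) ^ (p - 2) * x)
      ≤ ∫ x in (0:ℝ)..t, x ^ (p - 1) := by
    apply intervalIntegral.integral_mono_on ht (stmt4_gint hp hb ht)
      (intervalIntegral.intervalIntegrable_rpow' (by linarith))
    intro x hx
    obtain ⟨hx0, hxt⟩ := hx
    rcases hx0.eq_or_lt with h | h
    · rw [← h, Real.zero_rpow (ne_of_gt (by linarith : (0:ℝ) < p - 1))]
      simp
    · have h2 : (b + x) ^ (p - 2) ≤ x ^ (p - 2) :=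
        Real.rpow_le_rpow_of_nonpos h (by linarith) (by linarith)
      calc (b + x) ^ (p - 2) * x ≤ x ^ (p - 2) * x :=
            mul_le_mul_of_nonneg_right h2 hx0
        _ = x ^ (p - 1) := by
            rw [show p - 1 = (p - 2) + 1 by ring, Real.rpow_add_one h.ne']
  have h2 : (∫ x in (0:ℝ)..t, x ^ (p - 1)) = t ^ p / p := by
    rw [integral_rpow (Or.inl (by linarith))]
    rw [show p - 1 + 1 = p by ring, Real.zero_rpow (ne_of_gt (by linarith : (0:ℝ) < p))]
    ring
  have h3 : t ^ p / p ≤ t ^ p :=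
    div_le_self (Real.rpow_nonneg ht p) (by linarith)
  linarith

lemma stmt4_phi_le_quad (hp : 1 < p) (hp2 : p ≤ 2) {b t : ℝ} (hb : 0 < b) (ht : 0 ≤ t) :
    (∫ x in (0:ℝ)..t, (b + x) ^ (p - 2) * x) ≤ b ^ (p - 2) * (t ^ 2 / 2) := by
  have h1 : (∫ x in (0:ℝ)..t, (b + x) ^ (p - 2) * x)
      ≤ ∫ x in (0:ℝ)..t, b ^ (p - 2) * x := by
    apply intervalIntegral.integral_mono_on ht (stmt4_gint hp hb.le ht)
      ((continuous_const.mul continuous_id).intervalIntegrable 0 t)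
    intro x hx
    obtain ⟨hx0, hxt⟩ := hx
    refine mul_le_mul_of_nonneg_right ?_ hx0
    exact Real.rpow_le_rpow_of_nonpos hb (by linarith) (by linarith)
  have h2 : (∫ x in (0:ℝ)..t, b ^ (p - 2) * x) = b ^ (p - 2) * (t ^ 2 / 2) := by
    rw [intervalIntegral.integral_const_mul, integral_id]
    ring
  linarith

lemma stmt4_young (hp : 1 < p) : ∃ K : ℝ, 0 < K ∧ ∀ s t : ℝ, 0 ≤ s → 0 ≤ t →
    s * t ≤ 2 ^ (p - 3) * t ^ p + K * s ^ (p / (p - 1)) := by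
  have hp0 : (0:ℝ) < p := by linarith
  set q := p / (p - 1) with hq
  have hpq : p.HolderConjugate q := (Real.holderConjugate_iff_eq_conjExponent hp).2 rfl
  set l : ℝ := (p * 2 ^ (p - 3)) ^ ( 1 / p) with hl
  have hbase : (0:ℝ) < p * 2 ^ (p - 3) := by
    have := Real.rpow_pos_of_pos (show (0:ℝ) < 2 by norm_num) (p - 3)
    positivity
  have hlpos : 0 < l := Real.rpow_pos_of_pos hbase _
  have hq0 : 0 < q := hpq.symm.pos
  have hlq : 0 < l ^ q := Real.rpow_pos_of_pos hlpos _
  refine ⟨1 / (l ^ q * q), by positivity, ?_⟩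
  intro s t hs ht
  have h := Real.young_inequality_of_nonneg (mul_nonneg hlpos.le ht)
    (div_nonneg hs hlpos.le) hpq
  have h1 : (l * t) * (s / l) = s * t := by field_simp
  have h2 : (l * t) ^ p = (p * 2 ^ (p - 3)) * t ^ p := by
    rw [Real.mul_rpow hlpos.le ht]
    congr 1
    rw [hl, ← Real.rpow_mul hbase.le, one_div, inv_mul_cancel₀ hp0.ne', Real.rpow_one]
  have h3 : (s / l) ^ q = s ^ q / l ^ q := Real.div_rpow hs hlpos.le q
  rw [h1, h2, h3] at h
  have h4 : (p * 2 ^ (p - 3)) * t ^ p / p = 2 ^ (p - 3) * t ^ p := by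
    field_simp
  have h5 : s ^ q / l ^ q / q = 1 / (l ^ q * q) * s ^ q := by
    field_simp
  rw [h4, h5] at h
  exact h

end Aux

/-- `(φ_a)*(s) ∼ ((δ+a)^{p-1} + s)^{p'-2} s²` with `p' = p/(p-1)` and constants
    depending only on `p`. -/
theorem stmt_4 (p : ℝ) (hp : 1 < p) (hp2 : p ≤ 2) :
    ∃ c C : ℝ, 0 < c ∧ 0 < C ∧
      ∀ δ a s : ℝ, 0 ≤ δ → 0 ≤ a → 0 ≤ s →
        c * (((δ + a) ^ (p - 1) + s) ^ (p / (p - 1) - 2) * s ^ 2) ≤ phiShiftConj p δ a s ∧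
        phiShiftConj p δ a s ≤
          C * (((δ + a) ^ (p - 1) + s) ^ (p / (p - 1) - 2) * s ^ 2) := by
  have hp1 : (0:ℝ) < p - 1 := by linarith
  have hp0 : (0:ℝ) < p := by linarith
  obtain ⟨K, hK, hY⟩ := stmt4_young hp
  set q := p / (p - 1) with hqdef
  have hq2 : 2 ≤ q := by
    rw [hqdef, le_div_iff₀ hp1]; linarith
  have hqe : (p - 1) * (q - 2) = 2 - p := by
    rw [hqdef]; field_simp; ring
  have hq1 : 1 + 1 / (p - 1) = q := by
    rw [hqdef]; field_simp; ring
  have h1ppos : (0:ℝ) < 2 ^ (1 - p) := Real.rpow_pos_of_pos (by norm_num) _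
  have hcpos : (0:ℝ) < 2 ^ (2 - 2 * q) := Real.rpow_pos_of_pos (by norm_num) _
  have hCpos : (0:ℝ) < 2 ^ (1 - p) + K + 1 := by linarith
  have hr3 : (2:ℝ) ^ (-2:ℝ) = 1 / 4 := by
    rw [show (-2:ℝ) = ((-2:ℤ):ℝ) by norm_num, Real.rpow_intCast]
    norm_num
  refine ⟨2 ^ (2 - 2 * q), 2 ^ (1 - p) + K + 1, hcpos, hCpos, ?_⟩
  intro δ a s hδ ha hs
  set b := δ + a with hbdef
  have hb : 0 ≤ b := by positivity
  set A := b ^ (p - 1) with hAdef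
  have hA : 0 ≤ A := Real.rpow_nonneg hb _
  set T := (A + s) ^ (q - 2) * s ^ 2 with hTdef
  have hT : 0 ≤ T := mul_nonneg (Real.rpow_nonneg (by linarith) _) (sq_nonneg s)
  set S := (fun t => s * t - phiShift p δ a t) '' Set.Ici (0:ℝ) with hSdef
  have hconj : phiShiftConj p δ a s = sSup S := by rw [hSdef]; rfl
  have hphi : ∀ t : ℝ, 0 ≤ t →
      phiShift p δ a t = ∫ x in (0:ℝ)..t, (b + x) ^ (p - 2) * x := by
    intro t ht
    exact stmt4_phi_eq ha ht
  have hzero : phiShift p δ a 0 = 0 := by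
    rw [hphi 0 le_rfl, intervalIntegral.integral_same]
  have h0S : (0:ℝ) ∈ S := ⟨0, Set.mem_Ici.2 le_rfl, by simp [hzero]⟩
  -- universal upper bound
  have hub : ∀ t ∈ Set.Ici (0:ℝ), s * t - phiShift p δ a t ≤ (2 ^ (1 - p) + K + 1) * T := by
    intro t ht
    rw [Set.mem_Ici] at ht
    have hΦ := hphi t ht
    have hΦ0 : 0 ≤ phiShift p δ a t := by
      rw [hΦ]; exact stmt4_phi_nonneg hp hp2 hb ht
    rcases hs.eq_or_lt with hs0 | hs0
    · have hT0 : T = 0 := by rw [hTdef, ← hs0]; ring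
      rw [hT0, mul_zero, ← hs0, zero_mul]
      linarith
    have hsq : s ^ q ≤ T := by
      rw [hTdef]
      have h1 : s ^ q = s ^ (q - 2) * s ^ 2 := by
        rw [← Real.rpow_natCast s 2, ← Real.rpow_add hs0]
        norm_num
      rw [h1]
      refine mul_le_mul_of_nonneg_right ?_ (sq_nonneg s)
      exact Real.rpow_le_rpow hs0.le (by linarith) (by linarith)
    rcases le_or_gt b t with hbt | htb
    · -- b ≤ t : Young's inequality branch
      have hF5 : 2 ^ (p - 3) * t ^ p ≤ phiShift p δ a t := by
        rw [hΦ]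
        refine le_trans ?_ (stmt4_phi_ge hp hp2 hb ht)
        rcases ht.eq_or_lt with h0 | h0
        · rw [← h0]
          rw [Real.zero_rpow hp0.ne']
          norm_num
        · have e1 : (2 * t) ^ (p - 2) ≤ (b + t) ^ (p - 2) :=
            Real.rpow_le_rpow_of_nonpos (by positivity) (by linarith) (by linarith)
          have e2 : (2 * t) ^ (p - 2) = 2 ^ (p - 2) * t ^ (p - 2) :=
            Real.mul_rpow (by norm_num) h0.le
          have e3 : t ^ (p - 2) * t ^ 2 = t ^ p := by
            rw [← Real.rpow_natCast t 2, ← Real.rpow_add h0]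
            norm_num
          have e4 : (2:ℝ) ^ (p - 2) = 2 ^ (p - 3) * 2 := by
            rw [show p - 2 = (p - 3) + 1 by ring, Real.rpow_add_one (two_ne_zero)]
          calc 2 ^ (p - 3) * t ^ p = 2 ^ (p - 3) * (t ^ (p - 2) * t ^ 2) := by rw [e3]
            _ = (2 ^ (p - 3) * 2) * t ^ (p - 2) * (t ^ 2 / 2) := by ring
            _ = (2 * t) ^ (p - 2) * (t ^ 2 / 2) := by rw [e2, ← e4]
            _ ≤ (b + t) ^ (p - 2) * (t ^ 2 / 2) :=
                mul_le_mul_of_nonneg_right e1 (by positivity)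
      have hy := hY s t hs ht
      have h6 : K * s ^ q ≤ K * T := mul_le_mul_of_nonneg_left hsq hK.le
      have h7 : K * T ≤ (2 ^ (1 - p) + K + 1) * T :=
        mul_le_mul_of_nonneg_right (by linarith) hT
      linarith
    · -- t < b
      have hbpos : 0 < b := lt_of_le_of_lt ht htb
      rcases le_or_gt s A with hsA | hAs
      · -- quadratic branch
        have hF4 : 2 ^ (p - 3) * (b ^ (p - 2) * t ^ 2) ≤ phiShift p δ a t := by
          rw [hΦ]
          refine le_trans ?_ (stmt4_phi_ge hp hp2 hb ht)
          have e1 : (2 * b) ^ (p - 2) ≤ (b + t) ^ (p - 2) :=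
            Real.rpow_le_rpow_of_nonpos (by positivity) (by linarith) (by linarith)
          have e2 : (2 * b) ^ (p - 2) = 2 ^ (p - 2) * b ^ (p - 2) :=
            Real.mul_rpow (by norm_num) hbpos.le
          have e4 : (2:ℝ) ^ (p - 2) = 2 ^ (p - 3) * 2 := by
            rw [show p - 2 = (p - 3) + 1 by ring, Real.rpow_add_one (two_ne_zero)]
          calc 2 ^ (p - 3) * (b ^ (p - 2) * t ^ 2)
              = (2 ^ (p - 3) * 2) * b ^ (p - 2) * (t ^ 2 / 2) := by ring
            _ = (2 * b) ^ (p - 2) * (t ^ 2 / 2) := by rw [e2, ← e4]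
            _ ≤ (b + t) ^ (p - 2) * (t ^ 2 / 2) :=
                mul_le_mul_of_nonneg_right e1 (by positivity)
        have hκ : 0 < 2 ^ (p - 3) * b ^ (p - 2) :=
          mul_pos (Real.rpow_pos_of_pos (by norm_num) _) (Real.rpow_pos_of_pos hbpos _)
        have hquad : s * t - 2 ^ (p - 3) * (b ^ (p - 2) * t ^ 2)
            ≤ s ^ 2 / (4 * (2 ^ (p - 3) * b ^ (p - 2))) := by
          rw [le_div_iff₀ (by linarith)]
          nlinarith [sq_nonneg (2 * (2 ^ (p - 3) * b ^ (p - 2)) * t - s), hκ]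
        have hrw : s ^ 2 / (4 * (2 ^ (p - 3) * b ^ (p - 2)))
            = 2 ^ (1 - p) * (b ^ (2 - p) * s ^ 2) := by
          rw [eq_comm, eq_div_iff (ne_of_gt (by linarith : (0:ℝ) < 4 * (2 ^ (p - 3) * b ^ (p - 2))))]
          have r1 : (2:ℝ) ^ (1 - p) * 2 ^ (p - 3) = 2 ^ (-2:ℝ) := by
            rw [← Real.rpow_add (by norm_num), show 1 - p + (p - 3) = (-2:ℝ) by ring]
          have r2 : b ^ (2 - p) * b ^ (p - 2) = 1 := by
            rw [← Real.rpow_add hbpos, show 2 - p + (p - 2) = (0:ℝ) by ring, Real.rpow_zero]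
          calc 2 ^ (1 - p) * (b ^ (2 - p) * s ^ 2) * (4 * (2 ^ (p - 3) * b ^ (p - 2)))
              = 4 * (2 ^ (1 - p) * 2 ^ (p - 3)) * (b ^ (2 - p) * b ^ (p - 2)) * s ^ 2 := by
                ring
            _ = 4 * (1 / 4) * 1 * s ^ 2 := by rw [r1, hr3, r2]
            _ = s ^ 2 := by ring
        rw [hrw] at hquad
        have hBT : b ^ (2 - p) * s ^ 2 ≤ T := by
          rw [hTdef]
          refine mul_le_mul_of_nonneg_right ?_ (sq_nonneg s)
          have e3 : b ^ (2 - p) = A ^ (q - 2) := by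
            rw [hAdef, ← Real.rpow_mul hb, hqe]
          rw [e3]
          exact Real.rpow_le_rpow hA (by linarith) (by linarith)
        have l1 : 2 ^ (1 - p) * (b ^ (2 - p) * s ^ 2) ≤ 2 ^ (1 - p) * T :=
          mul_le_mul_of_nonneg_left hBT h1ppos.le
        have l2 : (2:ℝ) ^ (1 - p) * T ≤ (2 ^ (1 - p) + K + 1) * T :=
          mul_le_mul_of_nonneg_right (by linarith) hT
        linarith
      · -- A < s, t < b
        have e0 : b ≤ s ^ (1 / (p - 1)) := by
          have h1 : A ^ (1 / (p - 1)) ≤ s ^ (1 / (p - 1)) :=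
            Real.rpow_le_rpow hA hAs.le (by positivity)
          rwa [hAdef, ← Real.rpow_mul hb,
            show (p - 1) * (1 / (p - 1)) = 1 by field_simp, Real.rpow_one] at h1
        have e1 : s * t ≤ s * b := mul_le_mul_of_nonneg_left htb.le hs0.le
        have e2 : s * b ≤ s ^ q := by
          calc s * b ≤ s * s ^ (1 / (p - 1)) := mul_le_mul_of_nonneg_left e0 hs0.le
            _ = s ^ (1 + 1 / (p - 1)) := by
                rw [Real.rpow_add hs0, Real.rpow_one]
            _ = s ^ q := by rw [hq1]
        have e3 : T ≤ (2 ^ (1 - p) + K + 1) * T := le_mul_of_one_le_left hT (by linarith)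
        linarith
  have hbdd : BddAbove S := by
    refine ⟨(2 ^ (1 - p) + K + 1) * T, ?_⟩
    rintro y ⟨t, ht, rfl⟩
    exact hub t ht
  constructor
  · -- lower bound
    rw [hconj]
    rcases hs.eq_or_lt with hs0 | hs0
    · have hT0 : T = 0 := by rw [hTdef, ← hs0]; ring
      rw [hT0, mul_zero]
      exact le_csSup hbdd h0S
    rcases le_or_gt s A with hsA | hAs
    · -- 0 < s ≤ A, so b > 0
      have hbpos : 0 < b := by
        rcases hb.eq_or_lt with h | h
        · exfalso
          have : A = 0 := by
            rw [hAdef, ← h, Real.zero_rpow (ne_of_gt (by linarith : (0:ℝ) < p - 1))]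
          linarith
        · exact h
      set B := b ^ (2 - p) with hBdef
      have hBpos : 0 < B := Real.rpow_pos_of_pos hbpos _
      have hbB : b ^ (p - 2) * B = 1 := by
        rw [hBdef, ← Real.rpow_add hbpos, show p - 2 + (2 - p) = (0:ℝ) by ring,
          Real.rpow_zero]
      set t₀ := s * B / 2 with ht₀def
      have ht₀ : 0 ≤ t₀ := by positivity
      have hΦt₀ : phiShift p δ a t₀ ≤ b ^ (p - 2) * (t₀ ^ 2 / 2) := by
        rw [hphi t₀ ht₀]
        exact stmt4_phi_le_quad hp hp2 hbpos ht₀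
      have h1 : b ^ (p - 2) * (t₀ ^ 2 / 2) = B * s ^ 2 / 8 := by
        calc b ^ (p - 2) * (t₀ ^ 2 / 2) = (b ^ (p - 2) * B) * (B * s ^ 2) / 8 := by
              rw [ht₀def]; ring
          _ = B * s ^ 2 / 8 := by rw [hbB]; ring
      have h2 : s * t₀ = B * s ^ 2 / 2 := by rw [ht₀def]; ring
      have hval : (3 / 8 : ℝ) * (B * s ^ 2) ≤ s * t₀ - phiShift p δ a t₀ := by
        rw [h2]
        have := h1 ▸ hΦt₀
        linarith
      have hTle : T ≤ 2 ^ (q - 2) * (B * s ^ 2) := by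
        rw [hTdef]
        have e1 : (A + s) ^ (q - 2) ≤ (2 * A) ^ (q - 2) :=
          Real.rpow_le_rpow (by linarith) (by linarith) (by linarith)
        have e2 : (2 * A) ^ (q - 2) = 2 ^ (q - 2) * A ^ (q - 2) :=
          Real.mul_rpow (by norm_num) hA
        have e3 : A ^ (q - 2) = B := by
          rw [hAdef, hBdef, ← Real.rpow_mul hb, hqe]
        calc (A + s) ^ (q - 2) * s ^ 2 ≤ (2 * A) ^ (q - 2) * s ^ 2 :=
              mul_le_mul_of_nonneg_right e1 (sq_nonneg s)
          _ = 2 ^ (q - 2) * (B * s ^ 2) := by rw [e2, e3]; ring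
      have hc : (2:ℝ) ^ (2 - 2 * q) * 2 ^ (q - 2) ≤ 3 / 8 := by
        rw [← Real.rpow_add (by norm_num), show 2 - 2 * q + (q - 2) = -q by ring]
        have h4 : (2:ℝ) ^ (-q) ≤ 2 ^ (-2:ℝ) :=
          Real.rpow_le_rpow_of_exponent_le one_le_two (by linarith)
        rw [hr3] at h4
        linarith
      have hfin : 2 ^ (2 - 2 * q) * T ≤ (3 / 8 : ℝ) * (B * s ^ 2) := by
        calc 2 ^ (2 - 2 * q) * T ≤ 2 ^ (2 - 2 * q) * (2 ^ (q - 2) * (B * s ^ 2)) :=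
              mul_le_mul_of_nonneg_left hTle hcpos.le
          _ = (2 ^ (2 - 2 * q) * 2 ^ (q - 2)) * (B * s ^ 2) := by ring
          _ ≤ 3 / 8 * (B * s ^ 2) :=
              mul_le_mul_of_nonneg_right hc (by positivity)
      refine le_trans ?_ (le_csSup hbdd ⟨t₀, Set.mem_Ici.2 ht₀, rfl⟩)
      show 2 ^ (2 - 2 * q) * T ≤ s * t₀ - phiShift p δ a t₀
      linarith
    · -- A < s
      set t₀ := (s / 2) ^ (1 / (p - 1)) with ht₀def
      have hs2 : 0 < s / 2 := by linarith
      have ht₀pos : 0 < t₀ := Real.rpow_pos_of_pos hs2 _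
      have hΦt₀ : phiShift p δ a t₀ ≤ t₀ ^ p := by
        rw [hphi t₀ ht₀pos.le]
        exact stmt4_phi_le_pow hp hp2 hb ht₀pos.le
      have ht₀p1 : t₀ ^ (p - 1) = s / 2 := by
        rw [ht₀def, ← Real.rpow_mul hs2.le,
          show 1 / (p - 1) * (p - 1) = 1 by field_simp, Real.rpow_one]
      have ht₀p : t₀ ^ p = (s / 2) * t₀ := by
        rw [show p = (p - 1) + 1 by ring, Real.rpow_add_one ht₀pos.ne', ht₀p1]
      have hval : (s / 2) * t₀ ≤ s * t₀ - phiShift p δ a t₀ := by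
        have h5 : s * t₀ - t₀ ^ p = (s / 2) * t₀ := by rw [ht₀p]; ring
        linarith
      have hst : (s / 2) * t₀ = (s / 2) ^ q := by
        rw [← hq1, Real.rpow_add hs2, Real.rpow_one, ht₀def]
      have hTle : T ≤ 2 ^ (q - 2) * s ^ q := by
        rw [hTdef]
        have h1 : (A + s) ^ (q - 2) ≤ (2 * s) ^ (q - 2) :=
          Real.rpow_le_rpow (by linarith) (by linarith) (by linarith)
        have h2 : (2 * s) ^ (q - 2) = 2 ^ (q - 2) * s ^ (q - 2) :=
          Real.mul_rpow (by norm_num) hs0.le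
        have h3 : s ^ (q - 2) * s ^ 2 = s ^ q := by
          rw [← Real.rpow_natCast s 2, ← Real.rpow_add hs0]
          norm_num
        calc (A + s) ^ (q - 2) * s ^ 2 ≤ (2 * s) ^ (q - 2) * s ^ 2 :=
              mul_le_mul_of_nonneg_right h1 (sq_nonneg s)
          _ = 2 ^ (q - 2) * s ^ q := by rw [h2, ← h3]; ring
      have h4 : (s / 2) ^ q = 2 ^ (-q) * s ^ q := by
        rw [Real.div_rpow hs0.le (by norm_num) q, Real.rpow_neg (by norm_num)]
        ring
      have hfin : 2 ^ (2 - 2 * q) * T ≤ (s / 2) ^ q := by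
        have h6 : (2:ℝ) ^ (2 - 2 * q) * 2 ^ (q - 2) = 2 ^ (-q) := by
          rw [← Real.rpow_add (by norm_num), show 2 - 2 * q + (q - 2) = -q by ring]
        calc 2 ^ (2 - 2 * q) * T ≤ 2 ^ (2 - 2 * q) * (2 ^ (q - 2) * s ^ q) :=
              mul_le_mul_of_nonneg_left hTle hcpos.le
          _ = (2 ^ (2 - 2 * q) * 2 ^ (q - 2)) * s ^ q := by ring
          _ = 2 ^ (-q) * s ^ q := by rw [h6]
          _ = (s / 2) ^ q := h4.symm
      refine le_trans ?_ (le_csSup hbdd ⟨t₀, Set.mem_Ici.2 ht₀pos.le, rfl⟩)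
      show 2 ^ (2 - 2 * q) * T ≤ s * t₀ - phiShift p δ a t₀
      linarith
  · -- upper bound
    rw [hconj]
    refine csSup_le ⟨0, h0S⟩ ?_
    rintro y ⟨t, ht, rfl⟩
    exact hub t ht
end

section
/- Let X be a Banach space, I = (0,T), M ∈ ℕ, κ = T/M, t_m = mκ, I_m = (t_{m-1}, t_m]. Suppose f ∈ L²(I;X) with weak time derivative ∂_t f ∈ L²(I;X). Then for any choice of points τ_m ∈ I_m (m = 1,…,M): κ·∑_{m=1}^M (1/κ)∫_{I_m} ‖f(s) − f(τ_m)‖²_X ds ≤ κ²·‖∂_t f‖²_{L²(I;X)}. -/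
open scoped BigOperators
open MeasureTheory
lemma cs_aux {S : Set ℝ} (hSfin : volume S ≠ ⊤) {h : ℝ → ℝ} (h0 : ∀ x, 0 ≤ h x)
    (hint1 : IntegrableOn h S volume) (hint2 : IntegrableOn (fun x => h x ^ 2) S volume) :
    (∫ x in S, h x) ^ 2 ≤ (volume S).toReal * ∫ x in S, h x ^ 2 := by
  have hconj : (2:ℝ).HolderConjugate 2 := ⟨by norm_num, by norm_num, by norm_num⟩
  have h2 : (ENNReal.ofReal (2:ℝ)) = 2 := by norm_num
  have hmem : MemLp h (ENNReal.ofReal (2:ℝ)) (volume.restrict S) := by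
    rw [h2]
    exact (memLp_two_iff_integrable_sq hint1.aestronglyMeasurable).mpr hint2
  have hmem1 : MemLp (fun _ : ℝ => (1:ℝ)) (ENNReal.ofReal (2:ℝ)) (volume.restrict S) := by
    rw [h2]
    haveI : IsFiniteMeasure (volume.restrict S) :=
      ⟨by rwa [Measure.restrict_apply_univ, lt_top_iff_ne_top]⟩
    exact memLp_const 1
  have key := integral_mul_le_Lp_mul_Lq_of_nonneg hconj
    (Filter.Eventually.of_forall fun x => h0 x)
    (Filter.Eventually.of_forall fun _ => zero_le_one) hmem hmem1
  simp only [mul_one, one_pow] at key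
  have hV : (∫ (_ : ℝ) in S, (1:ℝ)) = (volume S).toReal := by simp [Measure.real]
  have hc : ((2:ℝ)) = ((2:ℕ):ℝ) := by norm_num
  simp only [Real.one_rpow, hc, Real.rpow_natCast] at key
  rw [show (∫ (a : ℝ) in S, (1:ℝ) ^ (2:ℕ)) = (volume S).toReal by simp [Measure.real]] at key
  have hb : 0 ≤ ∫ x in S, h x ^ 2 := integral_nonneg fun x => sq_nonneg _
  have hVnn : 0 ≤ (volume S).toReal := ENNReal.toReal_nonneg
  have hrw : ∀ x : ℝ, 0 ≤ x → (x ^ ((1:ℝ)/(2:ℕ))) ^ 2 = x := fun x hx => by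
    rw [← Real.rpow_natCast (x ^ ((1:ℝ)/(2:ℕ))) 2, ← Real.rpow_mul hx]
    norm_num
  have := pow_le_pow_left₀ (integral_nonneg fun x => h0 x) key 2
  rw [mul_pow, hrw _ hb, hrw _ hVnn] at this
  linarith [this]

/-- For `f ∈ W^{1,2}(I;X)` (expressed via the fundamental theorem of calculus with
    derivative `f' ∈ L²(I;X)`), and any choice of points `τ_m ∈ I_m = (t_{m-1}, t_m]`,
    `κ ∑_{m=1}^M ⨍_{I_m} ‖f(s) − f(τ_m)‖² ds ≤ κ² ‖f'‖²_{L²(I;X)}`. -/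
theorem stmt_11 {X : Type*} [NormedAddCommGroup X] [NormedSpace ℝ X] [CompleteSpace X]
    (T : ℝ) (hT : 0 < T) (M : ℕ) (hM : 0 < M) (κ : ℝ) (hκ : κ = T / M)
    (f f' : ℝ → X)
    (hmeas : ∀ s ∈ Set.Icc (0:ℝ) T, IntervalIntegrable f' volume 0 s)
    (hL2 : IntegrableOn (fun s => ‖f' s‖ ^ 2) (Set.Ioc (0:ℝ) T) volume)
    (hFTC : ∀ a ∈ Set.Icc (0:ℝ) T, ∀ b ∈ Set.Icc (0:ℝ) T,
      f b - f a = ∫ r in a..b, f' r)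
    (τ : ℕ → ℝ)
    (hτ : ∀ m, 1 ≤ m → m ≤ M → τ m ∈ Set.Ioc (((m : ℝ) - 1) * κ) ((m : ℝ) * κ))
    (hint : ∀ m, 1 ≤ m → m ≤ M →
      IntegrableOn (fun s => ‖f s - f (τ m)‖ ^ 2)
        (Set.Ioc (((m : ℝ) - 1) * κ) ((m : ℝ) * κ)) volume) :
    κ * ∑ m ∈ Finset.Icc 1 M,
        κ⁻¹ * ∫ s in Set.Ioc (((m : ℝ) - 1) * κ) ((m : ℝ) * κ), ‖f s - f (τ m)‖ ^ 2 ≤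
      κ ^ 2 * ∫ s in Set.Ioc (0:ℝ) T, ‖f' s‖ ^ 2 := by
  have hMpos : (0:ℝ) < M := Nat.cast_pos.mpr hM
  have hκ0 : 0 < κ := by rw [hκ]; positivity
  have hMκ : (M:ℝ) * κ = T := by rw [hκ]; field_simp
  -- properties of subintervals
  have hsub : ∀ m : ℕ, 1 ≤ m → m ≤ M →
      0 ≤ ((m:ℝ) - 1) * κ ∧ ((m:ℝ) - 1) * κ ≤ (m:ℝ) * κ ∧ (m:ℝ) * κ ≤ T := by
    intro m h1 h2
    have h1' : (1:ℝ) ≤ (m:ℝ) := by exact_mod_cast h1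
    have h2' : (m:ℝ) ≤ (M:ℝ) := by exact_mod_cast h2
    refine ⟨mul_nonneg (by linarith) hκ0.le, by nlinarith, ?_⟩
    calc (m:ℝ) * κ ≤ (M:ℝ) * κ := by nlinarith
      _ = T := hMκ
  -- key per-interval estimate
  have hkey : ∀ m : ℕ, 1 ≤ m → m ≤ M →
      (∫ s in Set.Ioc (((m : ℝ) - 1) * κ) ((m : ℝ) * κ), ‖f s - f (τ m)‖ ^ 2)
        ≤ κ ^ 2 * ∫ s in Set.Ioc (((m : ℝ) - 1) * κ) ((m : ℝ) * κ), ‖f' s‖ ^ 2 := by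
    intro m h1 h2
    obtain ⟨hA0, hAB, hBT⟩ := hsub m h1 h2
    set A := ((m:ℝ) - 1) * κ with hA
    set B := (m:ℝ) * κ with hB
    have hAT : A ≤ T := hAB.trans hBT
    have hAmem : A ∈ Set.Icc (0:ℝ) T := ⟨hA0, hAT⟩
    have hBmem : B ∈ Set.Icc (0:ℝ) T := ⟨hA0.trans hAB, hBT⟩
    have hIoc_sub : Set.Ioc A B ⊆ Set.Ioc (0:ℝ) T := Set.Ioc_subset_Ioc hA0 hBT
    have hiAB : IntervalIntegrable f' volume A B :=
      (hmeas A hAmem).symm.trans (hmeas B hBmem)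
    have hnormInt : IntegrableOn (fun s => ‖f' s‖) (Set.Ioc A B) volume := hiAB.norm.1
    have hL2m : IntegrableOn (fun s => ‖f' s‖ ^ 2) (Set.Ioc A B) volume :=
      hL2.mono_set hIoc_sub
    set C := ∫ s in Set.Ioc A B, ‖f' s‖ with hC
    have hC0 : 0 ≤ C := integral_nonneg fun s => norm_nonneg _
    have hτm := hτ m h1 h2
    have hτIcc : τ m ∈ Set.Icc (0:ℝ) T := ⟨hA0.trans hτm.1.le, hτm.2.trans hBT⟩
    -- pointwise bound
    have hpt : ∀ s ∈ Set.Ioc A B, ‖f s - f (τ m)‖ ^ 2 ≤ C ^ 2 := by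
      intro s hs
      have hsIcc : s ∈ Set.Icc (0:ℝ) T := ⟨hA0.trans hs.1.le, hs.2.trans hBT⟩
      have heq : f s - f (τ m) = ∫ r in (τ m)..s, f' r := hFTC (τ m) hτIcc s hsIcc
      have hle : ‖f s - f (τ m)‖ ≤ C := by
        rw [heq]
        refine (intervalIntegral.norm_integral_le_integral_norm_uIoc).trans ?_
        refine setIntegral_mono_set hnormInt
          (Filter.Eventually.of_forall fun x => norm_nonneg _) ?_
        refine HasSubset.Subset.eventuallyLE ?_
        rw [Set.uIoc]
        exact Set.Ioc_subset_Ioc (le_min hτm.1.le hs.1.le) (max_le hτm.2 hs.2)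
      exact pow_le_pow_left₀ (norm_nonneg _) hle 2
    have hvol : (volume (Set.Ioc A B)).toReal = κ := by
      rw [Real.volume_Ioc, ENNReal.toReal_ofReal (by linarith)]
      ring
    have hstep1 : (∫ s in Set.Ioc A B, ‖f s - f (τ m)‖ ^ 2) ≤ κ * C ^ 2 := by
      have := setIntegral_mono_on (hint m h1 h2)
        (integrableOn_const measure_Ioc_lt_top.ne) measurableSet_Ioc hpt
      calc (∫ s in Set.Ioc A B, ‖f s - f (τ m)‖ ^ 2)
          ≤ ∫ _ in Set.Ioc A B, C ^ 2 := this
        _ = κ * C ^ 2 := by rw [setIntegral_const, smul_eq_mul, Measure.real, hvol]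
    have hstep2 : C ^ 2 ≤ κ * ∫ s in Set.Ioc A B, ‖f' s‖ ^ 2 := by
      have := cs_aux (measure_Ioc_lt_top.ne) (fun x => norm_nonneg (f' x)) hnormInt hL2m
      rwa [hvol] at this
    calc (∫ s in Set.Ioc A B, ‖f s - f (τ m)‖ ^ 2) ≤ κ * C ^ 2 := hstep1
      _ ≤ κ * (κ * ∫ s in Set.Ioc A B, ‖f' s‖ ^ 2) := by
          exact mul_le_mul_of_nonneg_left hstep2 hκ0.le
      _ = κ ^ 2 * ∫ s in Set.Ioc A B, ‖f' s‖ ^ 2 := by ring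
  -- sum of subinterval integrals equals the full integral
  have hII : ∀ k : ℕ, IntervalIntegrable (fun s => ‖f' s‖ ^ 2) volume
      ((k:ℝ) * κ) (((k:ℝ) + 1) * κ) → True := fun _ _ => trivial
  have hsum : ∑ m ∈ Finset.Icc 1 M,
      (∫ s in Set.Ioc (((m : ℝ) - 1) * κ) ((m : ℝ) * κ), ‖f' s‖ ^ 2)
      = ∫ s in Set.Ioc (0:ℝ) T, ‖f' s‖ ^ 2 := by
    have hintk : ∀ k < M, IntervalIntegrable (fun s => ‖f' s‖ ^ 2) volume
        ((fun i : ℕ => (i:ℝ) * κ) k) ((fun i : ℕ => (i:ℝ) * κ) (k + 1)) := by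
      intro k hk
      have hle : (k:ℝ) * κ ≤ ((k:ℕ)+1 : ℝ) * κ := by nlinarith [Nat.cast_nonneg (α := ℝ) k]
      rw [intervalIntegrable_iff_integrableOn_Ioc_of_le (by push_cast; nlinarith [Nat.cast_nonneg (α := ℝ) k])]
      refine hL2.mono_set (Set.Ioc_subset_Ioc ?_ ?_)
      · positivity
      · push_cast
        have : ((k:ℝ) + 1) ≤ (M:ℝ) := by exact_mod_cast hk
        calc ((k:ℝ) + 1) * κ ≤ (M:ℝ) * κ := by nlinarith
          _ = T := hMκ
    have hadj := intervalIntegral.sum_integral_adjacent_intervals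
      (f := fun s => ‖f' s‖ ^ 2) (μ := volume) (a := fun i : ℕ => (i:ℝ) * κ) hintk
    simp only [Nat.cast_zero, zero_mul, hMκ] at hadj
    rw [← Finset.Ico_add_one_right_eq_Icc, Finset.sum_Ico_eq_sum_range]
    simp only [Nat.add_sub_cancel, Nat.succ_sub_one]
    rw [← intervalIntegral.integral_of_le hT.le, ← hadj]
    apply Finset.sum_congr rfl
    intro i _
    have h1 : ((1 + i : ℕ) : ℝ) - 1 = (i : ℝ) := by push_cast; ring
    have h2 : ((1 + i : ℕ) : ℝ) = ((i + 1 : ℕ) : ℝ) := by push_cast; ring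
    rw [h1, h2, intervalIntegral.integral_of_le
      (by push_cast; nlinarith [Nat.cast_nonneg (α := ℝ) i])]
  -- combine
  have hsum_le : ∑ m ∈ Finset.Icc 1 M,
      κ⁻¹ * ∫ s in Set.Ioc (((m : ℝ) - 1) * κ) ((m : ℝ) * κ), ‖f s - f (τ m)‖ ^ 2
      ≤ ∑ m ∈ Finset.Icc 1 M,
      κ * ∫ s in Set.Ioc (((m : ℝ) - 1) * κ) ((m : ℝ) * κ), ‖f' s‖ ^ 2 := by
    refine Finset.sum_le_sum fun m hm => ?_
    rw [Finset.mem_Icc] at hm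
    have := hkey m hm.1 hm.2
    rw [inv_mul_le_iff₀ hκ0]
    calc (∫ s in Set.Ioc (((m : ℝ) - 1) * κ) ((m : ℝ) * κ), ‖f s - f (τ m)‖ ^ 2)
        ≤ κ ^ 2 * ∫ s in Set.Ioc (((m : ℝ) - 1) * κ) ((m : ℝ) * κ), ‖f' s‖ ^ 2 := this
      _ = κ * (κ * ∫ s in Set.Ioc (((m : ℝ) - 1) * κ) ((m : ℝ) * κ), ‖f' s‖ ^ 2) := by ring
  calc κ * ∑ m ∈ Finset.Icc 1 M,
        κ⁻¹ * ∫ s in Set.Ioc (((m : ℝ) - 1) * κ) ((m : ℝ) * κ), ‖f s - f (τ m)‖ ^ 2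
      ≤ κ * ∑ m ∈ Finset.Icc 1 M,
        κ * ∫ s in Set.Ioc (((m : ℝ) - 1) * κ) ((m : ℝ) * κ), ‖f' s‖ ^ 2 :=
        mul_le_mul_of_nonneg_left hsum_le hκ0.le
    _ = κ ^ 2 * ∑ m ∈ Finset.Icc 1 M,
        (∫ s in Set.Ioc (((m : ℝ) - 1) * κ) ((m : ℝ) * κ), ‖f' s‖ ^ 2) := by
        rw [Finset.mul_sum, Finset.mul_sum]; congr 1; ext m; ring
    _ = κ ^ 2 * ∫ s in Set.Ioc (0:ℝ) T, ‖f' s‖ ^ 2 := by rw [hsum]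
end
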